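/- Let C be a read-once monotone CNF and D = D_1 ∨ ... ∨ D_l a read-once monotone DNF with D_1 ∪ ... ∪ D_l equal to the whole variable set, and suppose C → D is not a tautology. If there exist two distinct clauses C_u, C_v of C and a maxterm T of C ∨ D with C_u ∪ C_v ⊆ T, then the function C ∨ D is not read-once. -/
import Mathlib


/-- Monotone Boolean formulas over a variable type `V`, built from variables with ∧ and ∨. -/
inductive MonFormula (V : Type) : Type
  | var : V → MonFormula V
  | conj : MonFormula V → MonFormula V → MonFormula V
  | disj : MonFormula V → MonFormula V → MonFormula V

namespace MonFormula

def eval {V : Type} : MonFormula V → (V → Bool) → Bool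
  | var v, a => a v
  | conj φ ψ, a => eval φ a && eval ψ a
  | disj φ ψ, a => eval φ a || eval ψ a

/-- Number of occurrences of the variable `v` in the formula. -/
def occs {V : Type} [DecidableEq V] : MonFormula V → V → ℕ
  | var u, v => if u = v then 1 else 0
  | conj φ ψ, v => occs φ v + occs ψ v
  | disj φ ψ, v => occs φ v + occs ψ v

/-- A formula is read-once if every variable occurs at most once in it. -/
def ReadOnce {V : Type} [DecidableEq V] (φ : MonFormula V) : Prop :=
  ∀ v, φ.occs v ≤ 1

end MonFormula

/-- A Boolean function is read-once if some read-once monotone formula computes it. -/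
def ReadOnceFun {V : Type} [DecidableEq V] (f : (V → Bool) → Bool) : Prop :=
  ∃ φ : MonFormula V, φ.ReadOnce ∧ ∀ a, φ.eval a = f a

/-- The assignment setting variables in `S` to 1 and all others to 0. -/
def setTo1 {V : Type} [DecidableEq V] (S : Finset V) : V → Bool :=
  fun v => decide (v ∈ S)

/-- The assignment setting variables in `T` to 0 and all others to 1. -/
def setTo0 {V : Type} [DecidableEq V] (T : Finset V) : V → Bool :=
  fun v => decide (v ∉ T)

/-- `S` is a minterm of `f`: `f(S→1) = 1` but `f(S'→1) = 0` for every proper subset. -/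
def IsMinterm {V : Type} [DecidableEq V] (f : (V → Bool) → Bool) (S : Finset V) : Prop :=
  f (setTo1 S) = true ∧ ∀ S' ⊂ S, f (setTo1 S') = false

/-- `T` is a maxterm of `f`: `f(T→0) = 0` but `f(T'→0) = 1` for every proper subset. -/
def IsMaxterm {V : Type} [DecidableEq V] (f : (V → Bool) → Bool) (T : Finset V) : Prop :=
  f (setTo0 T) = false ∧ ∀ T' ⊂ T, f (setTo0 T') = true

/-- Evaluation of the monotone CNF with clauses `C i` (each clause a set of variables). -/
def cnfEval {V : Type} {m : ℕ} (C : Fin m → Finset V) (a : V → Bool) : Bool :=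
  decide (∀ i, ∃ v ∈ C i, a v = true)

/-- Evaluation of the monotone DNF with conjunctions `D j`. -/
def dnfEval {V : Type} {l : ℕ} (D : Fin l → Finset V) (a : V → Bool) : Bool :=
  decide (∃ j, ∀ v ∈ D j, a v = true)

namespace MonFormula

def vars {V : Type} [DecidableEq V] : MonFormula V → Finset V
  | var u => {u}
  | conj φ ψ => vars φ ∪ vars ψ
  | disj φ ψ => vars φ ∪ vars ψ

lemma mem_vars_iff {V : Type} [DecidableEq V] (φ : MonFormula V) (v : V) :
    v ∈ φ.vars ↔ 1 ≤ φ.occs v := by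
  induction φ with
  | var u =>
      simp only [vars, Finset.mem_singleton, occs]
      rcases eq_or_ne u v with h | h
      · simp [h]
      · simp [h, Ne.symm h]
  | conj φ ψ ih1 ih2 => simp [vars, occs, ih1, ih2]; omega
  | disj φ ψ ih1 ih2 => simp [vars, occs, ih1, ih2]; omega

lemma eval_congr {V : Type} [DecidableEq V] (φ : MonFormula V) {a b : V → Bool}
    (h : ∀ v ∈ φ.vars, a v = b v) : φ.eval a = φ.eval b := by
  induction φ with
  | var u => exact h u (by simp [vars])
  | conj φ ψ ih1 ih2 =>
      simp only [eval]
      rw [ih1 (fun v hv => h v (by simp [vars, hv])), ih2 (fun v hv => h v (by simp [vars, hv]))]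
  | disj φ ψ ih1 ih2 =>
      simp only [eval]
      rw [ih1 (fun v hv => h v (by simp [vars, hv])), ih2 (fun v hv => h v (by simp [vars, hv]))]

lemma readOnce_split {V : Type} [DecidableEq V] {φ ψ : MonFormula V}
    (h : ∀ v, occs φ v + occs ψ v ≤ 1) :
    φ.ReadOnce ∧ ψ.ReadOnce ∧ Disjoint φ.vars ψ.vars := by
  refine ⟨fun v => by have := h v; omega, fun v => by have := h v; omega, ?_⟩
  rw [Finset.disjoint_left]
  intro x hx1 hx2
  rw [mem_vars_iff] at hx1 hx2
  have := h x; omega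

end MonFormula

open MonFormula

lemma minterm_subset_vars {V : Type} [DecidableEq V] {φ : MonFormula V} {S : Finset V}
    (hS : IsMinterm φ.eval S) : S ⊆ φ.vars := by
  intro x hx
  by_contra hxv
  have hss : S.erase x ⊂ S := Finset.erase_ssubset hx
  have h2 := hS.2 _ hss
  have : φ.eval (setTo1 (S.erase x)) = φ.eval (setTo1 S) := by
    apply eval_congr
    intro w hw
    simp only [setTo1, Finset.mem_erase]
    have : w ≠ x := fun h => hxv (h ▸ hw)
    simp [this]
  rw [this, hS.1] at h2
  exact Bool.true_eq_false.mp h2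

lemma maxterm_subset_vars {V : Type} [DecidableEq V] {φ : MonFormula V} {T : Finset V}
    (hT : IsMaxterm φ.eval T) : T ⊆ φ.vars := by
  intro x hx
  by_contra hxv
  have hss : T.erase x ⊂ T := Finset.erase_ssubset hx
  have h2 := hT.2 _ hss
  have : φ.eval (setTo0 (T.erase x)) = φ.eval (setTo0 T) := by
    apply eval_congr
    intro w hw
    simp only [setTo0, Finset.mem_erase]
    have : w ≠ x := fun h => hxv (h ▸ hw)
    simp [this]
  rw [this, hT.1] at h2
  exact Bool.false_ne_true h2

lemma minterm_congr {V : Type} [DecidableEq V] {f g : (V → Bool) → Bool} {S : Finset V}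
    (h : ∀ a, f a = g a) (hS : IsMinterm f S) : IsMinterm g S :=
  ⟨(h _) ▸ hS.1, fun S' hS' => (h _) ▸ hS.2 S' hS'⟩

lemma maxterm_congr {V : Type} [DecidableEq V] {f g : (V → Bool) → Bool} {T : Finset V}
    (h : ∀ a, f a = g a) (hT : IsMaxterm f T) : IsMaxterm g T :=
  ⟨(h _) ▸ hT.1, fun T' hT' => (h _) ▸ hT.2 T' hT'⟩
lemma conj_aux {V : Type} [DecidableEq V] {φ ψ : MonFormula V}
    (hd : Disjoint φ.vars ψ.vars) {S T : Finset V}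
    (hS : IsMinterm (φ.conj ψ).eval S) (hT : IsMaxterm (φ.conj ψ).eval T)
    (hφF : φ.eval (setTo0 T) = false)
    (IH : ∀ S' T', IsMinterm φ.eval S' → IsMaxterm φ.eval T' → (S' ∩ T').card ≤ 1) :
    (S ∩ T).card ≤ 1 := by
  have hSv : S ⊆ (φ.conj ψ).vars := minterm_subset_vars hS
  have hTv : T ⊆ (φ.conj ψ).vars := maxterm_subset_vars hT
  set S₁ := S ∩ φ.vars with hS₁def
  set S₂ := S ∩ ψ.vars with hS₂def
  have hSsplit : S = S₁ ∪ S₂ := by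
    ext x; simp only [hS₁def, hS₂def, Finset.mem_union, Finset.mem_inter]
    constructor
    · intro hx
      have := hSv hx
      simp only [MonFormula.vars, Finset.mem_union] at this
      tauto
    · tauto
  have hS₂φ : ∀ w ∈ φ.vars, w ∉ S₂ := by
    intro w hw hw2
    exact (Finset.disjoint_left.mp hd hw) (Finset.mem_inter.mp hw2).2
  have hS₁ψ : ∀ w ∈ ψ.vars, w ∉ S₁ := by
    intro w hw hw2
    exact (Finset.disjoint_right.mp hd hw) (Finset.mem_inter.mp hw2).2
  -- evals at S
  have hevalS : φ.eval (setTo1 S) = true ∧ ψ.eval (setTo1 S) = true := by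
    have := hS.1
    simp only [MonFormula.eval, Bool.and_eq_true] at this
    exact this
  have hφS₁ : φ.eval (setTo1 S₁) = true := by
    rw [← hevalS.1]
    apply eval_congr
    intro w hw
    simp only [setTo1, hS₁def, Finset.mem_inter]
    simp [hw]
  have hψS₂ : ψ.eval (setTo1 S₂) = true := by
    rw [← hevalS.2]
    apply eval_congr
    intro w hw
    simp only [setTo1, hS₂def, Finset.mem_inter]
    simp [hw]
  -- S₁ is a minterm of φ
  have hS₁min : IsMinterm φ.eval S₁ := by
    refine ⟨hφS₁, ?_⟩
    intro S₁' hss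
    by_contra hne
    have hφS₁' : φ.eval (setTo1 S₁') = true := by
      cases h : φ.eval (setTo1 S₁') with
      | false => exact absurd h hne
      | true => rfl
    have hS₁'v : S₁' ⊆ φ.vars := fun x hx => (Finset.mem_inter.mp (hss.subset hx)).2
    have hprop : S₁' ∪ S₂ ⊂ S := by
      rw [hSsplit]
      refine Finset.ssubset_iff_of_subset (Finset.union_subset_union_left hss.subset) |>.mpr ?_
      obtain ⟨x, hxS₁, hxS₁'⟩ := Finset.exists_of_ssubset hss
      refine ⟨x, Finset.mem_union_left _ hxS₁, ?_⟩
      simp only [Finset.mem_union]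
      push_neg
      exact ⟨hxS₁', hS₂φ x (Finset.mem_inter.mp hxS₁).2⟩
    have h2 := hS.2 _ hprop
    simp only [MonFormula.eval, Bool.and_eq_false_iff] at h2
    have e1 : φ.eval (setTo1 (S₁' ∪ S₂)) = φ.eval (setTo1 S₁') := by
      apply eval_congr
      intro w hw
      simp only [setTo1, Finset.mem_union]
      have := hS₂φ w hw
      simp [this]
    have e2 : ψ.eval (setTo1 (S₁' ∪ S₂)) = ψ.eval (setTo1 S₂) := by
      apply eval_congr
      intro w hw
      simp only [setTo1, Finset.mem_union]
      have : w ∉ S₁' := fun h => (Finset.disjoint_right.mp hd hw) (hS₁'v h)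
      simp [this]
    rw [e1, e2, hφS₁', hψS₂] at h2
    simp at h2
  -- T is a maxterm of φ, with T ⊆ φ.vars
  have hTφ : T ⊆ φ.vars := by
    by_contra hTsub
    have : (T ∩ φ.vars) ⊂ T := by
      refine Finset.ssubset_iff_of_subset (Finset.inter_subset_left) |>.mpr ?_
      obtain ⟨x, hxT, hxv⟩ := Finset.not_subset.mp hTsub
      exact ⟨x, hxT, fun h => hxv (Finset.mem_inter.mp h).2⟩
    have h2 := hT.2 _ this
    simp only [MonFormula.eval, Bool.and_eq_true] at h2
    have e1 : φ.eval (setTo0 (T ∩ φ.vars)) = φ.eval (setTo0 T) := by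
      apply eval_congr
      intro w hw
      simp only [setTo0, Finset.mem_inter]
      simp [hw]
    rw [e1, hφF] at h2
    simp at h2
  have hTmax : IsMaxterm φ.eval T := by
    refine ⟨hφF, ?_⟩
    intro T' hT'
    have h2 := hT.2 _ hT'
    simp only [MonFormula.eval, Bool.and_eq_true] at h2
    exact h2.1
  -- conclude
  have hinter : S ∩ T = S₁ ∩ T := by
    ext x
    simp only [Finset.mem_inter]
    constructor
    · rintro ⟨hxS, hxT⟩
      refine ⟨Finset.mem_inter.mpr ⟨hxS, hTφ hxT⟩, hxT⟩
    · rintro ⟨hx, hxT⟩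
      exact ⟨(Finset.mem_inter.mp hx).1, hxT⟩
  rw [hinter]
  exact IH _ _ hS₁min hTmax
lemma disj_aux {V : Type} [DecidableEq V] {φ ψ : MonFormula V}
    (hd : Disjoint φ.vars ψ.vars) {S T : Finset V}
    (hS : IsMinterm (φ.disj ψ).eval S) (hT : IsMaxterm (φ.disj ψ).eval T)
    (hφT : φ.eval (setTo1 S) = true)
    (IH : ∀ S' T', IsMinterm φ.eval S' → IsMaxterm φ.eval T' → (S' ∩ T').card ≤ 1) :
    (S ∩ T).card ≤ 1 := by
  have hTv : T ⊆ (φ.disj ψ).vars := maxterm_subset_vars hT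
  set T₁ := T ∩ φ.vars with hT₁def
  set T₂ := T ∩ ψ.vars with hT₂def
  have hTsplit : T = T₁ ∪ T₂ := by
    ext x; simp only [hT₁def, hT₂def, Finset.mem_union, Finset.mem_inter]
    constructor
    · intro hx
      have := hTv hx
      simp only [MonFormula.vars, Finset.mem_union] at this
      tauto
    · tauto
  have hT₂φ : ∀ w ∈ φ.vars, w ∉ T₂ := by
    intro w hw hw2
    exact (Finset.disjoint_left.mp hd hw) (Finset.mem_inter.mp hw2).2
  -- evals at T
  have hevalT : φ.eval (setTo0 T) = false ∧ ψ.eval (setTo0 T) = false := by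
    have := hT.1
    simp only [MonFormula.eval, Bool.or_eq_false_iff] at this
    exact this
  have hφT₁ : φ.eval (setTo0 T₁) = false := by
    rw [← hevalT.1]
    apply eval_congr
    intro w hw
    simp only [setTo0, hT₁def, Finset.mem_inter]
    simp [hw]
  have hψT₂ : ψ.eval (setTo0 T₂) = false := by
    rw [← hevalT.2]
    apply eval_congr
    intro w hw
    simp only [setTo0, hT₂def, Finset.mem_inter]
    simp [hw]
  -- T₁ is a maxterm of φ
  have hT₁max : IsMaxterm φ.eval T₁ := by
    refine ⟨hφT₁, ?_⟩
    intro T₁' hss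
    by_contra hne
    have hφT₁' : φ.eval (setTo0 T₁') = false := by
      cases h : φ.eval (setTo0 T₁') with
      | true => exact absurd h hne
      | false => rfl
    have hT₁'v : T₁' ⊆ φ.vars := fun x hx => (Finset.mem_inter.mp (hss.subset hx)).2
    have hprop : T₁' ∪ T₂ ⊂ T := by
      rw [hTsplit]
      refine Finset.ssubset_iff_of_subset (Finset.union_subset_union_left hss.subset) |>.mpr ?_
      obtain ⟨x, hxT₁, hxT₁'⟩ := Finset.exists_of_ssubset hss
      refine ⟨x, Finset.mem_union_left _ hxT₁, ?_⟩
      simp only [Finset.mem_union]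
      push_neg
      exact ⟨hxT₁', hT₂φ x (Finset.mem_inter.mp hxT₁).2⟩
    have h2 := hT.2 _ hprop
    simp only [MonFormula.eval, Bool.or_eq_true] at h2
    have e1 : φ.eval (setTo0 (T₁' ∪ T₂)) = φ.eval (setTo0 T₁') := by
      apply eval_congr
      intro w hw
      simp only [setTo0, Finset.mem_union]
      have := hT₂φ w hw
      simp [this]
    have e2 : ψ.eval (setTo0 (T₁' ∪ T₂)) = ψ.eval (setTo0 T₂) := by
      apply eval_congr
      intro w hw
      simp only [setTo0, Finset.mem_union]
      have : w ∉ T₁' := fun h => (Finset.disjoint_right.mp hd hw) (hT₁'v h)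
      simp [this]
    rw [e1, e2, hφT₁', hψT₂] at h2
    simp at h2
  -- S ⊆ φ.vars, and S is a minterm of φ
  have hSφ : S ⊆ φ.vars := by
    by_contra hSsub
    have : (S ∩ φ.vars) ⊂ S := by
      refine Finset.ssubset_iff_of_subset (Finset.inter_subset_left) |>.mpr ?_
      obtain ⟨x, hxS, hxv⟩ := Finset.not_subset.mp hSsub
      exact ⟨x, hxS, fun h => hxv (Finset.mem_inter.mp h).2⟩
    have h2 := hS.2 _ this
    simp only [MonFormula.eval, Bool.or_eq_false_iff] at h2
    have e1 : φ.eval (setTo1 (S ∩ φ.vars)) = φ.eval (setTo1 S) := by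
      apply eval_congr
      intro w hw
      simp only [setTo1, Finset.mem_inter]
      simp [hw]
    rw [e1, hφT] at h2
    simp at h2
  have hSmin : IsMinterm φ.eval S := by
    refine ⟨hφT, ?_⟩
    intro S' hS'
    have h2 := hS.2 _ hS'
    simp only [MonFormula.eval, Bool.or_eq_false_iff] at h2
    exact h2.1
  -- conclude
  have hinter : S ∩ T = S ∩ T₁ := by
    ext x
    simp only [hT₁def, Finset.mem_inter]
    constructor
    · rintro ⟨h1, h2⟩; exact ⟨h1, h2, hSφ h1⟩
    · rintro ⟨h1, h2, _⟩; exact ⟨h1, h2⟩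
  rw [hinter]
  exact IH _ _ hSmin hT₁max
lemma gurvich {V : Type} [DecidableEq V] (φ : MonFormula V) (hro : φ.ReadOnce) :
    ∀ S T : Finset V, IsMinterm φ.eval S → IsMaxterm φ.eval T → (S ∩ T).card ≤ 1 := by
  induction φ with
  | var u =>
      intro S T hS hT
      have hSu : S = {u} := by
        have h1 : u ∈ S := by
          have := hS.1
          simp only [MonFormula.eval, setTo1, decide_eq_true_eq] at this
          exact this
        by_contra hne
        have hss : {u} ⊂ S := Finset.ssubset_iff_of_subset (Finset.singleton_subset_iff.mpr h1)
          |>.mpr (by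
            rcases Finset.exists_of_ssubset (Finset.ssubset_iff_subset_ne.mpr
              ⟨Finset.singleton_subset_iff.mpr h1, fun h => hne h.symm⟩) with ⟨x, hx1, hx2⟩
            exact ⟨x, hx1, hx2⟩)
        have h2 := hS.2 _ hss
        simp [MonFormula.eval, setTo1] at h2
      have hTu : T = {u} := by
        have h1 : u ∈ T := by
          have := hT.1
          simp only [MonFormula.eval, setTo0, decide_eq_false_iff_not, not_not] at this
          exact this
        by_contra hne
        have hss : {u} ⊂ T := Finset.ssubset_iff_of_subset (Finset.singleton_subset_iff.mpr h1)
          |>.mpr (by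
            rcases Finset.exists_of_ssubset (Finset.ssubset_iff_subset_ne.mpr
              ⟨Finset.singleton_subset_iff.mpr h1, fun h => hne h.symm⟩) with ⟨x, hx1, hx2⟩
            exact ⟨x, hx1, hx2⟩)
        have h2 := hT.2 _ hss
        simp [MonFormula.eval, setTo0] at h2
      subst hSu hTu
      simp
  | conj φ ψ ih1 ih2 =>
      intro S T hS hT
      obtain ⟨hro1, hro2, hd⟩ := MonFormula.readOnce_split (fun v => hro v)
      have hfalse : φ.eval (setTo0 T) = false ∨ ψ.eval (setTo0 T) = false := by
        have := hT.1
        simp only [MonFormula.eval, Bool.and_eq_false_iff] at this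
        exact this
      rcases hfalse with h | h
      · exact conj_aux hd hS hT h (ih1 hro1)
      · have hc : ∀ a, (φ.conj ψ).eval a = (ψ.conj φ).eval a := by
          intro a; simp [MonFormula.eval, Bool.and_comm]
        have : (S ∩ T).card ≤ 1 :=
          conj_aux hd.symm (minterm_congr hc hS) (maxterm_congr hc hT) h (ih2 hro2)
        exact this
  | disj φ ψ ih1 ih2 =>
      intro S T hS hT
      obtain ⟨hro1, hro2, hd⟩ := MonFormula.readOnce_split (fun v => hro v)
      have htrue : φ.eval (setTo1 S) = true ∨ ψ.eval (setTo1 S) = true := by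
        have := hS.1
        simp only [MonFormula.eval, Bool.or_eq_true] at this
        exact this
      rcases htrue with h | h
      · exact disj_aux hd hS hT h (ih1 hro1)
      · have hc : ∀ a, (φ.disj ψ).eval a = (ψ.disj φ).eval a := by
          intro a; simp [MonFormula.eval, Bool.or_comm]
        exact disj_aux hd.symm (minterm_congr hc hS) (maxterm_congr hc hT) h (ih2 hro2)

/-- If `C → D` is not a tautology and some maxterm `T` of `C ∨ D` contains two
distinct clauses of the read-once CNF `C`, then `C ∨ D` is not read-once. -/
theorem stmt_7 {V : Type} [Fintype V] [DecidableEq V] {m l : ℕ}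
    (C : Fin m → Finset V) (D : Fin l → Finset V)
    (hCdisj : ∀ i i', i ≠ i' → Disjoint (C i) (C i'))
    (hCne : ∀ i, (C i).Nonempty)
    (hDdisj : ∀ j j', j ≠ j' → Disjoint (D j) (D j'))
    (hDcover : Finset.univ.biUnion D = (Finset.univ : Finset V))
    (hnotaut : ∃ a : V → Bool, cnfEval C a = true ∧ dnfEval D a = false)
    (u v : Fin m) (huv : u ≠ v)
    (T : Finset V)
    (hT : IsMaxterm (fun a => cnfEval C a || dnfEval D a) T)
    (hu : C u ⊆ T) (hv : C v ⊆ T) :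
    ¬ ReadOnceFun (fun a => cnfEval C a || dnfEval D a) := by
  intro ⟨φ, hro, heval⟩
  set f : (V → Bool) → Bool := fun a => cnfEval C a || dnfEval D a with hfdef
  obtain ⟨a, hacnf, hadnf⟩ := hnotaut
  -- P S : CNF true and DNF false at setTo1 S
  classical
  have hagree : setTo1 (Finset.univ.filter (fun v => a v = true)) = a := by
    funext w
    simp only [setTo1, Finset.mem_filter, Finset.mem_univ, true_and]
    cases h : a w <;> simp [h]
  have hPa : cnfEval C (setTo1 (Finset.univ.filter (fun v => a v = true))) = true ∧
      dnfEval D (setTo1 (Finset.univ.filter (fun v => a v = true))) = false := by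
    rw [hagree]; exact ⟨hacnf, hadnf⟩
  -- pick a minimal-cardinality witness
  have hne : (Finset.univ.filter (fun S : Finset V =>
      cnfEval C (setTo1 S) = true ∧ dnfEval D (setTo1 S) = false)).Nonempty :=
    ⟨_, Finset.mem_filter.mpr ⟨Finset.mem_univ _, hPa⟩⟩
  obtain ⟨S₀, hS₀mem, hS₀min⟩ := Finset.exists_min_image _ Finset.card hne
  have hPS₀ : cnfEval C (setTo1 S₀) = true ∧ dnfEval D (setTo1 S₀) = false :=
    (Finset.mem_filter.mp hS₀mem).2
  -- S₀ is a minterm of f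
  have hmint : IsMinterm f S₀ := by
    constructor
    · simp only [hfdef, hPS₀.1, Bool.true_or]
    · intro S' hS'
      have hdnf' : dnfEval D (setTo1 S') = false := by
        by_contra h
        have h' : dnfEval D (setTo1 S') = true := by
          cases hh : dnfEval D (setTo1 S') with
          | false => exact absurd hh h
          | true => rfl
        simp only [dnfEval, decide_eq_true_eq] at h'
        obtain ⟨j, hj⟩ := h'
        have : dnfEval D (setTo1 S₀) = true := by
          simp only [dnfEval, decide_eq_true_eq]
          refine ⟨j, fun w hw => ?_⟩
          have := hj w hw
          simp only [setTo1, decide_eq_true_eq] at this ⊢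
          exact hS'.subset this
        rw [hPS₀.2] at this
        exact Bool.false_ne_true this
      have hcnf' : cnfEval C (setTo1 S') = false := by
        by_contra h
        have h' : cnfEval C (setTo1 S') = true := by
          cases hh : cnfEval C (setTo1 S') with
          | false => exact absurd hh h
          | true => rfl
        have hle := hS₀min S' (Finset.mem_filter.mpr ⟨Finset.mem_univ _, h', hdnf'⟩)
        have hlt := Finset.card_lt_card hS'
        omega
      simp only [hfdef, hcnf', hdnf', Bool.or_self]
  -- transfer to the formula and apply Gurvich
  have hmintφ : IsMinterm φ.eval S₀ := minterm_congr (fun a => (heval a).symm) hmint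
  have hmaxφ : IsMaxterm φ.eval T := maxterm_congr (fun a => (heval a).symm) hT
  have hcard := gurvich φ hro S₀ T hmintφ hmaxφ
  -- two distinct points in S₀ ∩ T
  have hcnfS₀ := hPS₀.1
  simp only [cnfEval, decide_eq_true_eq] at hcnfS₀
  obtain ⟨x, hxCu, hxS₀⟩ := hcnfS₀ u
  obtain ⟨y, hyCv, hyS₀⟩ := hcnfS₀ v
  simp only [setTo1, decide_eq_true_eq] at hxS₀ hyS₀
  have hxy : x ≠ y := by
    intro h
    exact Finset.disjoint_left.mp (hCdisj u v huv) hxCu (h ▸ hyCv)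
  have hxmem : x ∈ S₀ ∩ T := Finset.mem_inter.mpr ⟨hxS₀, hu hxCu⟩
  have hymem : y ∈ S₀ ∩ T := Finset.mem_inter.mpr ⟨hyS₀, hv hyCv⟩
  have : 1 < (S₀ ∩ T).card := Finset.one_lt_card.mpr ⟨x, hxmem, y, hymem, hxy⟩
  omega
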